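/- If for a sample i the InfoNCE term -log( exp(⟨u_i, v_i⟩/σ) / Σ_{j=1}^N exp(⟨u_i, v_j⟩/σ) ) is at most η, then for every j ≠ i, ⟨u_i, v_i⟩ - ⟨u_i, v_j⟩ ≥ -σ·log(e^η - 1), i.e. small contrastive loss forces the positive-pair similarity to dominate all negative-pair similarities by an explicit margin. -/

import Mathlib

/-!
Writing `S = ∑ₗ exp aₗ` with `aₗ = ⟪uᵢ, vₗ⟫ / σ`, the loss bound says `S ≤ e^η exp aᵢ`.
Since `S ≥ exp aⱼ + exp aᵢ` for `j ≠ i`, this gives `exp (aⱼ - aᵢ) ≤ e^η - 1`; taking logarithms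
and multiplying by `σ` yields the margin.
-/

open scoped RealInnerProductSpace BigOperators

namespace Real

variable {ι : Type*} [Fintype ι]

lemma sum_exp_pos [Nonempty ι] (a : ι → ℝ) : 0 < ∑ l, exp (a l) :=
  Finset.sum_pos (fun l _ => exp_pos (a l)) Finset.univ_nonempty

lemma neg_log_exp_div_sum_exp (a : ι → ℝ) (i : ι) :
    -log (exp (a i) / ∑ l, exp (a l)) = log (∑ l, exp (a l)) - a i := by
  have : Nonempty ι := ⟨i⟩
  rw [log_div (exp_pos _).ne' (sum_exp_pos a).ne', log_exp, neg_sub]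

lemma exp_add_exp_le_sum_exp (a : ι → ℝ) {i j : ι} (hij : j ≠ i) :
    exp (a j) + exp (a i) ≤ ∑ l, exp (a l) := by
  classical
  rw [← Finset.sum_pair (f := fun l => exp (a l)) hij]
  exact Finset.sum_le_sum_of_subset_of_nonneg (Finset.subset_univ _)
    (fun l _ _ => (exp_pos (a l)).le)

lemma exp_sub_le_of_log_sum_exp_sub_le {a : ι → ℝ} {i j : ι} (hij : j ≠ i) {η : ℝ}
    (h : log (∑ l, exp (a l)) - a i ≤ η) :
    exp (a j - a i) ≤ exp η - 1 := by
  have : Nonempty ι := ⟨i⟩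
  have hS_le : ∑ l, exp (a l) ≤ exp η * exp (a i) := by
    rw [← exp_add, ← exp_log (sum_exp_pos a)]
    exact exp_le_exp.mpr (by linarith)
  have hpair := exp_add_exp_le_sum_exp a hij
  rw [exp_sub, div_le_iff₀ (exp_pos _)]
  linarith

lemma sub_le_log_of_log_sum_exp_sub_le {a : ι → ℝ} {i j : ι} (hij : j ≠ i) {η : ℝ}
    (h : log (∑ l, exp (a l)) - a i ≤ η) :
    a j - a i ≤ log (exp η - 1) := by
  have hexp := exp_sub_le_of_log_sum_exp_sub_le hij h
  exact (le_log_iff_exp_le ((exp_pos _).trans_le hexp)).mpr hexp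

end Real

theorem stmt6_general {k N : ℕ}
    (u v : Fin N → EuclideanSpace ℝ (Fin k))
    (σ : ℝ) (hσ : 0 < σ) (η : ℝ) (i : Fin N)
    (hloss : -Real.log (Real.exp (⟪u i, v i⟫ / σ) /
        ∑ j, Real.exp (⟪u i, v j⟫ / σ)) ≤ η) :
    ∀ j : Fin N, j ≠ i →
      ⟪u i, v i⟫ - ⟪u i, v j⟫ ≥ -σ * Real.log (Real.exp η - 1) := by
  intro j hj
  rw [Real.neg_log_exp_div_sum_exp (fun l => ⟪u i, v l⟫ / σ)] at hloss
  have hmargin := Real.sub_le_log_of_log_sum_exp_sub_le hj hloss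
  rw [← sub_div, div_le_iff₀' hσ] at hmargin
  linarith

/-- Small per-sample InfoNCE loss forces the positive-pair similarity to dominate
every negative-pair similarity by an explicit margin `-σ·log(e^η - 1)`. -/
theorem stmt6 {k N : ℕ} (hN : 2 ≤ N)
    (u v : Fin N → EuclideanSpace ℝ (Fin k))
    (hu : ∀ i, ‖u i‖ = 1) (hv : ∀ j, ‖v j‖ = 1)
    (σ : ℝ) (hσ : 0 < σ) (η : ℝ) (hη : 0 < η) (i : Fin N)
    (hloss : -Real.log (Real.exp (⟪u i, v i⟫ / σ) /
        ∑ j, Real.exp (⟪u i, v j⟫ / σ)) ≤ η) :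
    ∀ j : Fin N, j ≠ i →
      ⟪u i, v i⟫ - ⟪u i, v j⟫ ≥ -σ * Real.log (Real.exp η - 1) :=
  stmt6_general u v σ hσ η i hloss
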